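/- arXiv:2603.01967 — 3 statements merged into one kernel-verified Lean document; each statement's English description precedes it below -/
import Mathlib

section
/- Let G be a graph, X a nonempty subset of V(G) such that for every x in X, the neighborhood of x within G is a clique (i.e., X is a simplicial set of G). Then G is perfect if and only if G − X is perfect. -/
open SimpleGraph

variable {V : Type}

/-- The clique number of the subgraph of `G` induced on `S`. -/
noncomputable def omegaOn (G : SimpleGraph V) (S : Set V) : ℕ :=
  sSup {n | ∃ s : Finset V, ↑s ⊆ S ∧ G.IsNClique n s}

/-- The subgraph of `G` induced on `S` is a perfect graph. -/
def IsPerfectOn (G : SimpleGraph V) (S : Set V) : Prop :=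
  ∀ T : Set V, T ⊆ S → (G.induce T).chromaticNumber = (omegaOn G T : ℕ∞)

/-- Every nonempty induced subgraph of `G[S]` admits a perfect division. -/
def PerfDivOn (G : SimpleGraph V) (S : Set V) : Prop :=
  ∀ H : Set V, H ⊆ S → H.Nonempty →
    ∃ A B : Set V, A ∪ B = H ∧ Disjoint A B ∧
      IsPerfectOn G A ∧ omegaOn G B < omegaOn G H

/-- `G` is minimally nonperfectly divisible. -/
def MNPD (G : SimpleGraph V) : Prop :=
  ¬ PerfDivOn G Set.univ ∧ ∀ S : Set V, S ≠ Set.univ → PerfDivOn G S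

/-- The external neighbourhood `N(X)`. -/
def extNbhd (G : SimpleGraph V) (X : Set V) : Set V :=
  {v | v ∉ X ∧ ∃ x ∈ X, G.Adj v x}

lemma omega_bdd [Fintype V] (G : SimpleGraph V) (S : Set V) :
    BddAbove {n | ∃ s : Finset V, ↑s ⊆ S ∧ G.IsNClique n s} := by
  refine ⟨Fintype.card V, fun n hn => ?_⟩
  obtain ⟨s, _, hs⟩ := hn
  calc n = s.card := hs.2.symm
    _ ≤ Fintype.card V := Finset.card_le_univ s |>.trans (by simp)

lemma clique_le_omega [Fintype V] (G : SimpleGraph V) {S : Set V} {n : ℕ} {s : Finset V}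
    (hsS : ↑s ⊆ S) (hs : G.IsNClique n s) : n ≤ omegaOn G S :=
  le_csSup (omega_bdd G S) ⟨s, hsS, hs⟩

lemma omega_exists [Fintype V] (G : SimpleGraph V) (S : Set V) :
    ∃ s : Finset V, ↑s ⊆ S ∧ G.IsNClique (omegaOn G S) s := by
  have h0 : (0 : ℕ) ∈ {n | ∃ s : Finset V, ↑s ⊆ S ∧ G.IsNClique n s} :=
    ⟨∅, by simp, by simp [SimpleGraph.isNClique_empty]⟩
  exact Nat.sSup_mem ⟨0, h0⟩ (omega_bdd G S)

lemma omega_mono [Fintype V] (G : SimpleGraph V) {S S' : Set V} (h : S ⊆ S') :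
    omegaOn G S ≤ omegaOn G S' := by
  obtain ⟨s, hsS, hs⟩ := omega_exists G S
  exact clique_le_omega G (hsS.trans h) hs

lemma omega_le_chrom [Fintype V] (G : SimpleGraph V) (T : Set V) :
    (omegaOn G T : ℕ∞) ≤ (G.induce T).chromaticNumber := by
  classical
  obtain ⟨s, hsT, hs⟩ := omega_exists G T
  set s' : Finset ↥T := s.subtype (· ∈ T) with hs'
  have hcard : s'.card = s.card := by
    rw [hs', Finset.card_subtype, Finset.filter_true_of_mem (fun a ha => hsT ha)]
  have hclique : (G.induce T).IsClique ↑s' := by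
    intro a ha b hb hab
    rw [Finset.mem_coe, hs', Finset.mem_subtype] at ha hb
    have := hs.1 (Finset.mem_coe.mpr ha) (Finset.mem_coe.mpr hb)
      (fun h => hab (Subtype.ext h))
    simpa using this
  have h := hclique.card_le_chromaticNumber
  rwa [hcard, hs.2] at h

lemma extend_coloring [Fintype V] (G : SimpleGraph V) {T : Set V} {x : V} (hxT : x ∈ T)
    {n : ℕ} (hc : (G.induce (T \ {x})).Colorable n)
    (hcard : ((Set.toFinite {v | v ∈ T ∧ G.Adj x v}).toFinset).card < n) :
    (G.induce T).Colorable n := by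
  classical
  obtain ⟨C⟩ := hc
  set A := (Set.toFinite {v | v ∈ T ∧ G.Adj x v}).toFinset with hA
  have hmemA : ∀ v, v ∈ A ↔ v ∈ T ∧ G.Adj x v := fun v => Set.Finite.mem_toFinset _
  have hne : ∀ v ∈ A, v ≠ x := fun v hv h => G.irrefl (h ▸ ((hmemA v).mp hv).2)
  set U : Finset (Fin n) := A.attach.image
    (fun v => C ⟨v.1, ⟨((hmemA v.1).mp v.2).1, hne v.1 v.2⟩⟩) with hU
  have hUcard : U.card < n := lt_of_le_of_lt
    ((Finset.card_image_le).trans (le_of_eq (Finset.card_attach))) hcard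
  have hcne : Uᶜ.Nonempty := by
    rw [← Finset.card_pos, Finset.card_compl]
    simp only [Fintype.card_fin]
    omega
  obtain ⟨c0, hc0⟩ := hcne
  rw [Finset.mem_compl] at hc0
  refine ⟨SimpleGraph.Coloring.mk (fun v => if h : (v : V) = x then c0
    else C ⟨v, ⟨v.2, h⟩⟩) ?_⟩
  rintro v w hadj heq
  have hvw : G.Adj ↑v ↑w := hadj
  by_cases hv : (v : V) = x <;> by_cases hw : (w : V) = x
  · exact G.ne_of_adj hvw (hv.trans hw.symm)
  · rw [dif_pos hv, dif_neg hw] at heq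
    apply hc0
    rw [hU, Finset.mem_image]
    have hwA : (w : V) ∈ A := (hmemA _).mpr ⟨w.2, hv ▸ hvw⟩
    exact ⟨⟨w, hwA⟩, Finset.mem_attach _ _, heq.symm⟩
  · rw [dif_neg hv, dif_pos hw] at heq
    apply hc0
    rw [hU, Finset.mem_image]
    have hvA : (v : V) ∈ A := (hmemA _).mpr ⟨v.2, hw ▸ hvw.symm⟩
    exact ⟨⟨v, hvA⟩, Finset.mem_attach _ _, heq⟩
  · rw [dif_neg hv, dif_neg hw] at heq
    have hadj' : (G.induce (T \ {x})).Adj ⟨v, ⟨v.2, hv⟩⟩ ⟨w, ⟨w.2, hw⟩⟩ := hvw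
    exact C.valid hadj' heq


lemma key_perfect [Fintype V] (G : SimpleGraph V) (X : Set V)
    (hsimp : ∀ x ∈ X, G.IsClique (G.neighborSet x))
    (hperf : IsPerfectOn G Xᶜ) (T : Set V) :
    (G.induce T).chromaticNumber = (omegaOn G T : ℕ∞) := by
  classical
  suffices h : ∀ k, ∀ T : Set V, (T ∩ X).ncard = k →
      (G.induce T).chromaticNumber = (omegaOn G T : ℕ∞) from h _ T rfl
  intro k
  induction k using Nat.strong_induction_on with
  | _ k ih =>
    intro T hk
    rcases Set.eq_empty_or_nonempty (T ∩ X) with he | ⟨x, hxT, hxX⟩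
    · refine hperf T fun v hv hvX => ?_
      have : v ∈ T ∩ X := ⟨hv, hvX⟩
      rw [he] at this
      exact this
    · set T' := T \ {x} with hT'
      have hsub : T' ∩ X = (T ∩ X) \ {x} := by
        ext v; simp only [hT', Set.mem_inter_iff, Set.mem_diff, Set.mem_singleton_iff]; tauto
      have hlt : (T' ∩ X).ncard < k := by
        rw [hsub, ← hk]
        exact Set.ncard_diff_singleton_lt_of_mem ⟨hxT, hxX⟩ (Set.toFinite _)
      have ih' := ih _ hlt T' rfl
      refine le_antisymm ?_ (omega_le_chrom G T)
      have hcol' : (G.induce T').Colorable (omegaOn G T') :=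
        chromaticNumber_le_iff_colorable.mp ih'.le
      have hcol : (G.induce T').Colorable (omegaOn G T) :=
        hcol'.mono (omega_mono G Set.diff_subset)
      set A := (Set.toFinite {v | v ∈ T ∧ G.Adj x v}).toFinset with hA
      have hmemA : ∀ v, v ∈ A ↔ v ∈ T ∧ G.Adj x v := fun v => Set.Finite.mem_toFinset _
      have hxA : x ∉ A := fun h => G.irrefl ((hmemA x |>.mp h).2)
      have hclique : G.IsNClique (A.card + 1) (insert x A) := by
        constructor
        · intro a ha b hb hab
          simp only [Finset.coe_insert, Set.mem_insert_iff, Finset.mem_coe] at ha hb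
          rcases ha with rfl | ha <;> rcases hb with rfl | hb
          · exact absurd rfl hab
          · exact ((hmemA b).mp hb).2
          · exact ((hmemA a).mp ha).2.symm
          · exact hsimp x hxX ((hmemA a).mp ha).2 ((hmemA b).mp hb).2 hab
        · rw [Finset.card_insert_of_notMem hxA]
      have hAsub : ↑(insert x A) ⊆ T := by
        intro v hv
        simp only [Finset.coe_insert, Set.mem_insert_iff, Finset.mem_coe] at hv
        rcases hv with rfl | hv
        · exact hxT
        · exact ((hmemA v).mp hv).1
      have hcard : A.card < omegaOn G T := by
        have := clique_le_omega G hAsub hclique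
        omega
      exact (extend_coloring G hxT hcol hcard).chromaticNumber_le


theorem stmt_0 [Fintype V] (G : SimpleGraph V) (X : Set V) (hX : X.Nonempty)
    (hsimp : ∀ x ∈ X, G.IsClique (G.neighborSet x)) :
    IsPerfectOn G Set.univ ↔ IsPerfectOn G Xᶜ := by
  constructor
  · intro h T _
    exact h T (Set.subset_univ T)
  · intro h T _
    exact key_perfect G X hsimp h T
end

section
/- Let G be a graph and X a nonempty simplicial set of G. Then G is perfectly divisible if and only if G − X is perfectly divisible. -/
open SimpleGraph

variable {V : Type}

/-!
A simplicial vertex `y` can be added to a perfect induced subgraph without destroying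
perfection: `y` together with its neighbours forms a clique, so `y` has fewer than `ω`
neighbours and an optimal colouring of the rest extends to `y`. Hence a perfect division
`(A, B)` of `H \ X` yields the perfect division `(A ∪ (H ∩ X), B)` of `H`, which shows that
`G` is perfectly divisible as soon as `G - X` is; the converse is immediate since the
definition quantifies over all induced subgraphs.
-/

open Set

section CliqueNumber

variable [Fintype V] {G : SimpleGraph V} {S T : Set V}

lemma bddAbove_cliqueSizes (G : SimpleGraph V) (S : Set V) :
    BddAbove {n | ∃ s : Finset V, ↑s ⊆ S ∧ G.IsNClique n s} :=
  ⟨Fintype.card V, by rintro _ ⟨s, -, hs⟩; exact hs.card_eq ▸ s.card_le_univ⟩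

lemma exists_isNClique_omegaOn (G : SimpleGraph V) (S : Set V) :
    ∃ s : Finset V, ↑s ⊆ S ∧ G.IsNClique (omegaOn G S) s :=
  Nat.sSup_mem (s := {n | ∃ s : Finset V, (s : Set V) ⊆ S ∧ G.IsNClique n s})
    ⟨0, ∅, by simp⟩ (bddAbove_cliqueSizes G S)

lemma card_le_omegaOn {s : Finset V} (hsS : ↑s ⊆ S) (hs : G.IsClique s) :
    s.card ≤ omegaOn G S :=
  le_csSup (bddAbove_cliqueSizes G S) ⟨s, hsS, ⟨hs, rfl⟩⟩

lemma omegaOn_mono (h : S ⊆ T) : omegaOn G S ≤ omegaOn G T := by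
  obtain ⟨s, hsS, hs⟩ := exists_isNClique_omegaOn G S
  exact hs.card_eq ▸ card_le_omegaOn (hsS.trans h) hs.isClique

lemma omegaOn_empty : omegaOn G ∅ = 0 := by
  obtain ⟨s, hs, hc⟩ := exists_isNClique_omegaOn G ∅
  rw [← hc.card_eq, Finset.card_eq_zero, ← Finset.coe_eq_empty]
  exact subset_empty_iff.mp hs

lemma omegaOn_pos (hS : S.Nonempty) : 0 < omegaOn G S := by
  obtain ⟨v, hv⟩ := hS
  have : ({v} : Finset V).card ≤ omegaOn G S := card_le_omegaOn (by simpa using hv) (by simp)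
  simpa [Nat.one_le_iff_ne_zero, Nat.pos_iff_ne_zero] using this

lemma omegaOn_le_chromaticNumber : (omegaOn G S : ℕ∞) ≤ (G.induce S).chromaticNumber := by
  obtain ⟨s, hsS, hs⟩ := exists_isNClique_omegaOn G S
  refine le_chromaticNumber_of_pairwise_adj (ι := s) (by simp [hs.card_eq])
    (fun v => ⟨v, hsS v.2⟩) fun v w hvw => ?_
  exact hs.isClique v.2 w.2 (Subtype.coe_ne_coe.mpr hvw)

end CliqueNumber

section Simplicial

variable [Fintype V] {G : SimpleGraph V} {S A : Set V} {y : V} {n : ℕ}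

lemma colorable_induce_insert_of_isClique_neighborSet (hy : G.IsClique (G.neighborSet y))
    (hS : (G.induce S).Colorable n) (hn : omegaOn G (insert y S) ≤ n) :
    (G.induce (insert y S)).Colorable n := by
  classical
  obtain ⟨C⟩ := hS
  let N : Finset S := {v | G.Adj y v}
  have hN : N.card < n := by
    let M : Finset V := N.map (Function.Embedding.subtype _)
    have hyM : y ∉ M := by simp [M, N]
    have hclique : G.IsClique ↑(insert y M) := by
      rw [Finset.coe_insert]
      refine (hy.subset fun v hv => ?_).insert fun v hv _ => ?_ <;> simp_all [M, N]
    have hsub : ↑(insert y M) ⊆ insert y S := by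
      intro v
      simp +contextual [M, N, or_imp]
    have := card_le_omegaOn hsub hclique
    rw [Finset.card_insert_of_notMem hyM, Finset.card_map] at this
    omega
  obtain ⟨c, -, hc⟩ : ∃ c ∈ (Finset.univ : Finset (Fin n)), c ∉ N.image C :=
    Finset.exists_mem_notMem_of_card_lt_card (by simpa using Finset.card_image_le.trans_lt hN)
  have hfree : ∀ (v : V) (hv : v ∈ S), G.Adj y v → C ⟨v, hv⟩ ≠ c := fun v hv hyv heq =>
    hc (Finset.mem_image.mpr ⟨⟨v, hv⟩, by simpa [N] using hyv, heq⟩)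
  refine ⟨Coloring.mk (fun v => if h : v.1 ∈ S then C ⟨v, h⟩ else c) ?_⟩
  rintro ⟨a, ha⟩ ⟨b, hb⟩ hab
  simp only [comap_adj, Function.Embedding.coe_subtype] at hab
  by_cases haS : a ∈ S <;> by_cases hbS : b ∈ S <;> simp only [haS, hbS, dite_true, dite_false]
  · exact C.valid hab
  · obtain rfl := (mem_insert_iff.mp hb).resolve_right hbS
    exact hfree a haS hab.symm
  · obtain rfl := (mem_insert_iff.mp ha).resolve_right haS
    exact (hfree b hbS hab).symm
  · obtain rfl := (mem_insert_iff.mp ha).resolve_right haS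
    obtain rfl := (mem_insert_iff.mp hb).resolve_right hbS
    exact (G.irrefl hab).elim

lemma IsPerfectOn.insert (hA : IsPerfectOn G A) (hy : G.IsClique (G.neighborSet y)) :
    IsPerfectOn G (insert y A) := by
  intro T hT
  refine le_antisymm ?_ omegaOn_le_chromaticNumber
  have hcol : (G.induce (T \ {y})).Colorable (omegaOn G T) := by
    rw [← chromaticNumber_le_iff_colorable, hA _ (sdiff_singleton_subset_iff.mpr hT)]
    exact_mod_cast omegaOn_mono sdiff_subset
  rw [chromaticNumber_le_iff_colorable]
  by_cases hyT : y ∈ T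
  · have := colorable_induce_insert_of_isClique_neighborSet hy hcol
      (by rw [insert_sdiff_self_of_mem hyT])
    rwa [insert_sdiff_self_of_mem hyT] at this
  · rwa [sdiff_singleton_eq_self hyT] at hcol

lemma IsPerfectOn.union_of_isClique_neighborSet {Y : Set V} (hA : IsPerfectOn G A)
    (hY : ∀ y ∈ Y, G.IsClique (G.neighborSet y)) : IsPerfectOn G (A ∪ Y) := by
  refine (toFinite Y).induction_on_subset (motive := fun Y _ => IsPerfectOn G (A ∪ Y)) Y
    (by rwa [union_empty]) fun hyY _ _ hAY => ?_
  rw [union_insert]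
  exact hAY.insert (hY _ hyY)

lemma isPerfectOn_empty : IsPerfectOn G ∅ := by
  intro T hT
  obtain rfl := subset_empty_iff.mp hT
  simp [omegaOn_empty]

end Simplicial

theorem stmt_2_general [Fintype V] (G : SimpleGraph V) (X : Set V)
    (hsimp : ∀ x ∈ X, G.IsClique (G.neighborSet x)) :
    PerfDivOn G Set.univ ↔ PerfDivOn G Xᶜ := by
  refine ⟨fun h H _ => h H (subset_univ H), fun h H _ hH => ?_⟩
  obtain ⟨A, B, hAB, hdisj, hA, hB⟩ : ∃ A B : Set V, A ∪ B = H \ X ∧ Disjoint A B ∧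
      IsPerfectOn G A ∧ omegaOn G B < omegaOn G H := by
    rcases (H \ X).eq_empty_or_nonempty with hHX | hHX
    · refine ⟨∅, ∅, by simp [hHX], by simp, isPerfectOn_empty, ?_⟩
      rw [omegaOn_empty]
      exact omegaOn_pos hH
    · obtain ⟨A, B, hAB, hdisj, hA, hB⟩ := h (H \ X) (fun _ hx => hx.2) hHX
      exact ⟨A, B, hAB, hdisj, hA, hB.trans_le (omegaOn_mono sdiff_subset)⟩
  refine ⟨A ∪ (H ∩ X), B, ?_, ?_,
    hA.union_of_isClique_neighborSet fun y hy => hsimp y hy.2, hB⟩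
  · rw [union_right_comm, hAB, sdiff_union_inter]
  · have hBHX : B ⊆ H \ X := hAB ▸ subset_union_right
    exact disjoint_union_left.mpr ⟨hdisj, (disjoint_sdiff_inter.mono_left hBHX).symm⟩

theorem stmt_2 [Fintype V] (G : SimpleGraph V) (X : Set V) (hX : X.Nonempty)
    (hsimp : ∀ x ∈ X, G.IsClique (G.neighborSet x)) :
    PerfDivOn G Set.univ ↔ PerfDivOn G Xᶜ :=
  stmt_2_general G X hsimp
end

section
/- No minimally nonperfectly divisible (P₂ ∪ P₄)-free graph contains a homogeneous set that is a clique of size 2. (In the paper's stronger form, no MNPD (P₂∪P₄)-free graph contains any homogeneous set.) -/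
open SimpleGraph

variable {V : Type}

/-- `G` has no induced copy of `P₂ ∪ P₄`. -/
def P2P4Free (G : SimpleGraph V) : Prop :=
  ¬ ∃ a b c d e f : V, [a, b, c, d, e, f].Nodup ∧
    G.Adj a b ∧
    G.Adj c d ∧ G.Adj d e ∧ G.Adj e f ∧ ¬ G.Adj c e ∧ ¬ G.Adj c f ∧ ¬ G.Adj d f ∧
    ¬ G.Adj a c ∧ ¬ G.Adj a d ∧ ¬ G.Adj a e ∧ ¬ G.Adj a f ∧
    ¬ G.Adj b c ∧ ¬ G.Adj b d ∧ ¬ G.Adj b e ∧ ¬ G.Adj b f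

section Aux

variable [Fintype V] (G : SimpleGraph V)

lemma aux_omega_nonempty (S : Set V) :
    {n | ∃ s : Finset V, ↑s ⊆ S ∧ G.IsNClique n s}.Nonempty :=
  ⟨0, ∅, by simp, by simp⟩

lemma aux_omega_bdd (S : Set V) :
    BddAbove {n | ∃ s : Finset V, ↑s ⊆ S ∧ G.IsNClique n s} := by
  refine ⟨Fintype.card V, ?_⟩
  rintro n ⟨s, -, hs⟩
  rw [← hs.card_eq]
  exact Finset.card_le_univ s

lemma aux_le_omegaOn {S : Set V} {n : ℕ} {s : Finset V} (hsS : ↑s ⊆ S)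
    (hs : G.IsNClique n s) : n ≤ omegaOn G S :=
  le_csSup (aux_omega_bdd G S) ⟨s, hsS, hs⟩

lemma aux_omegaOn_exists (S : Set V) :
    ∃ s : Finset V, ↑s ⊆ S ∧ G.IsNClique (omegaOn G S) s :=
  Nat.sSup_mem (aux_omega_nonempty G S) (aux_omega_bdd G S)

lemma aux_omegaOn_mono {S T : Set V} (h : S ⊆ T) : omegaOn G S ≤ omegaOn G T := by
  obtain ⟨s, hsS, hs⟩ := aux_omegaOn_exists G S
  exact aux_le_omegaOn G (hsS.trans h) hs

lemma aux_one_le_omegaOn {S : Set V} (h : S.Nonempty) : 1 ≤ omegaOn G S := by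
  obtain ⟨v, hv⟩ := h
  refine aux_le_omegaOn G (s := {v}) (by simpa) ?_
  constructor
  · simp [SimpleGraph.isClique_iff]
  · simp

end Aux

/-- no induced P₄ inside `S`. -/
def NoP4 (G : SimpleGraph V) (S : Set V) : Prop :=
  ¬ ∃ c d e f : V, c ∈ S ∧ d ∈ S ∧ e ∈ S ∧ f ∈ S ∧
    c ≠ d ∧ c ≠ e ∧ c ≠ f ∧ d ≠ e ∧ d ≠ f ∧ e ≠ f ∧
    G.Adj c d ∧ G.Adj d e ∧ G.Adj e f ∧ ¬ G.Adj c e ∧ ¬ G.Adj c f ∧ ¬ G.Adj d f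

lemma NoP4.anti {G : SimpleGraph V} {S S' : Set V} (h : S ⊆ S') (hS : NoP4 G S') :
    NoP4 G S := by
  rintro ⟨c, d, e, f, hc, hd, he, hf, hrest⟩
  exact hS ⟨c, d, e, f, h hc, h hd, h he, h hf, hrest⟩

section Main

variable [Fintype V] (G : SimpleGraph V)

lemma aux_stable_meets_maxclique (S : Set V) (hS : NoP4 G S)
    (T : Finset V) (hTS : ↑T ⊆ S)
    (hTst : ∀ a ∈ T, ∀ b ∈ T, a ≠ b → ¬ G.Adj a b)
    (hTmax : ∀ t : Finset V, ↑t ⊆ S → (∀ a ∈ t, ∀ b ∈ t, a ≠ b → ¬ G.Adj a b) →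
      t.card ≤ T.card)
    (K : Finset V) (hKS : ↑K ⊆ S) (hK : G.IsClique ↑K) (hKne : K.Nonempty)
    (hKmax : ∀ k : Finset V, ↑k ⊆ S → G.IsClique ↑k → k.card ≤ K.card) :
    ∃ v, v ∈ T ∧ v ∈ K := by
  classical
  by_contra hcon
  push_neg at hcon
  have step1 : ∀ k ∈ K, ∃ t ∈ T, G.Adj k t := by
    intro k hk
    by_contra h1
    push_neg at h1
    have hkT : k ∉ T := fun hkT => hcon k hkT hk
    have hle : (insert k T).card ≤ T.card := by
      apply hTmax
      · rw [Finset.coe_insert]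
        exact Set.insert_subset (hKS hk) hTS
      · intro a ha b hb hab
        rcases Finset.mem_insert.1 ha with ha' | ha'
        · rcases Finset.mem_insert.1 hb with hb' | hb'
          · exact absurd (ha'.trans hb'.symm) hab
          · subst ha'
            exact h1 b hb'
        · rcases Finset.mem_insert.1 hb with hb' | hb'
          · subst hb'
            exact fun h => h1 a ha' h.symm
          · exact hTst a ha' b hb' hab
    rw [Finset.card_insert_of_notMem hkT] at hle
    omega
  have step2 : ∀ t ∈ T, ∃ k ∈ K, ¬ G.Adj t k := by
    intro t ht
    by_contra h2
    push_neg at h2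
    have htK : t ∉ K := hcon t ht
    have hle : (insert t K).card ≤ K.card := by
      apply hKmax
      · rw [Finset.coe_insert]
        exact Set.insert_subset (hTS ht) hKS
      · rw [Finset.coe_insert]
        exact hK.insert (fun b hb _ => h2 b (Finset.mem_coe.1 hb))
    rw [Finset.card_insert_of_notMem htK] at hle
    omega
  obtain ⟨k0, hk0⟩ := hKne
  obtain ⟨t0, ht0T, ht0adj⟩ := step1 k0 hk0
  obtain ⟨t1, ht1T, ht1max⟩ := T.exists_max_image
    (fun t => (K.filter (fun k => G.Adj t k)).card) ⟨t0, ht0T⟩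
  have hd1 : 0 < (K.filter (fun k => G.Adj t1 k)).card := by
    have h0 : 0 < (K.filter (fun k => G.Adj t0 k)).card := by
      rw [Finset.card_pos]
      exact ⟨k0, Finset.mem_filter.2 ⟨hk0, ht0adj.symm⟩⟩
    exact lt_of_lt_of_le h0 (ht1max t0 ht0T)
  rw [Finset.card_pos] at hd1
  obtain ⟨k1, hk1f⟩ := hd1
  obtain ⟨hk1K, ht1k1⟩ := Finset.mem_filter.1 hk1f
  obtain ⟨k2, hk2K, ht1k2⟩ := step2 t1 ht1T
  have hk12 : k1 ≠ k2 := fun h => ht1k2 (h ▸ ht1k1)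
  obtain ⟨t2, ht2T, hk2t2⟩ := step1 k2 hk2K
  have ht12 : t1 ≠ t2 := fun h => ht1k2 (h ▸ hk2t2.symm)
  have hTK : ∀ t ∈ T, ∀ k ∈ K, t ≠ k := fun t ht k hk h => hcon t ht (h ▸ hk)
  by_cases hadj : G.Adj t2 k1
  · have hsub : K.filter (fun k => G.Adj t1 k) ⊆ K.filter (fun k => G.Adj t2 k) := by
      intro k hkf
      obtain ⟨hkK, ht1k⟩ := Finset.mem_filter.1 hkf
      refine Finset.mem_filter.2 ⟨hkK, ?_⟩
      by_contra ht2k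
      have hkk2 : k ≠ k2 := fun h => ht1k2 (h ▸ ht1k)
      exact hS ⟨t1, k, k2, t2,
        hTS ht1T, hKS hkK, hKS hk2K, hTS ht2T,
        hTK t1 ht1T k hkK, hTK t1 ht1T k2 hk2K, ht12,
        hkk2, (hTK t2 ht2T k hkK).symm, (hTK t2 ht2T k2 hk2K).symm,
        ht1k, hK (Finset.mem_coe.2 hkK) (Finset.mem_coe.2 hk2K) hkk2, hk2t2,
        ht1k2, hTst t1 ht1T t2 ht2T ht12, fun h => ht2k h.symm⟩
    have hk2mem : k2 ∈ K.filter (fun k => G.Adj t2 k) :=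
      Finset.mem_filter.2 ⟨hk2K, hk2t2.symm⟩
    have hk2nmem : k2 ∉ K.filter (fun k => G.Adj t1 k) := fun h =>
      ht1k2 (Finset.mem_filter.1 h).2
    have hlt : (K.filter (fun k => G.Adj t1 k)).card <
        (K.filter (fun k => G.Adj t2 k)).card :=
      Finset.card_lt_card ⟨hsub, fun h => hk2nmem (h hk2mem)⟩
    exact absurd (ht1max t2 ht2T) (by omega)
  · exact hS ⟨t1, k1, k2, t2,
      hTS ht1T, hKS hk1K, hKS hk2K, hTS ht2T,
      hTK t1 ht1T k1 hk1K, hTK t1 ht1T k2 hk2K, ht12,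
      hk12, (hTK t2 ht2T k1 hk1K).symm, (hTK t2 ht2T k2 hk2K).symm,
      ht1k1, hK (Finset.mem_coe.2 hk1K) (Finset.mem_coe.2 hk2K) hk12, hk2t2,
      ht1k2, hTst t1 ht1T t2 ht2T ht12, fun h => hadj h.symm⟩

end Main

section Main2

variable [Fintype V] (G : SimpleGraph V)

lemma aux_noP4_colorable : ∀ (n : ℕ) (S : Set V), S.ncard ≤ n → NoP4 G S →
    (G.induce S).Colorable (omegaOn G S) := by
  intro n
  induction n with
  | zero =>
    intro S hc _
    have hS : S = ∅ := by
      rw [← Set.ncard_eq_zero S.toFinite]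
      omega
    subst hS
    haveI : IsEmpty ↥(∅ : Set V) := Set.isEmpty_coe_sort.2 rfl
    exact ⟨SimpleGraph.Coloring.mk (fun v => isEmptyElim v) (fun {a b} _ => isEmptyElim a)⟩
  | succ n ih =>
    intro S hc hS
    classical
    rcases Set.eq_empty_or_nonempty S with rfl | hSne
    · haveI : IsEmpty ↥(∅ : Set V) := Set.isEmpty_coe_sort.2 rfl
      exact ⟨SimpleGraph.Coloring.mk (fun v => isEmptyElim v) (fun {a b} _ => isEmptyElim a)⟩
    obtain ⟨v0, hv0⟩ := hSne
    set stabs : Set ℕ := {m : ℕ | ∃ t : Finset V, ↑t ⊆ S ∧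
      (∀ a ∈ t, ∀ b ∈ t, a ≠ b → ¬ G.Adj a b) ∧ t.card = m} with hstabs
    have hsingle : (1 : ℕ) ∈ stabs := by
      refine ⟨{v0}, by simpa using hv0, ?_, by simp⟩
      intro a ha b hb hab
      rw [Finset.mem_singleton] at ha hb
      exact absurd (ha.trans hb.symm) hab
    have hne : stabs.Nonempty := ⟨1, hsingle⟩
    have hbdd : BddAbove stabs := by
      refine ⟨Fintype.card V, ?_⟩
      rintro m ⟨t, -, -, rfl⟩
      exact Finset.card_le_univ t
    obtain ⟨T, hTS, hTst, hTcard⟩ := Nat.sSup_mem hne hbdd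
    have hTmax : ∀ t : Finset V, ↑t ⊆ S →
        (∀ a ∈ t, ∀ b ∈ t, a ≠ b → ¬ G.Adj a b) → t.card ≤ T.card := by
      intro t ht hst
      rw [hTcard]
      exact le_csSup hbdd ⟨t, ht, hst, rfl⟩
    have hTne : T.Nonempty := by
      rw [← Finset.card_pos, hTcard]
      have := le_csSup hbdd hsingle
      omega
    set S' : Set V := S \ ↑T with hS'
    have hS'sub : S' ⊆ S := Set.diff_subset
    have hS'ss : S' ⊂ S := by
      refine ⟨hS'sub, fun habs => ?_⟩
      obtain ⟨t, ht⟩ := hTne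
      exact (habs (hTS (Finset.mem_coe.2 ht))).2 (Finset.mem_coe.2 ht)
    have hS'card : S'.ncard ≤ n := by
      have := Set.ncard_lt_ncard hS'ss S.toFinite
      omega
    have hS'noP4 : NoP4 G S' := NoP4.anti hS'sub hS
    have homega : omegaOn G S' < omegaOn G S := by
      rcases lt_or_eq_of_le (aux_omegaOn_mono G hS'sub) with h | h
      · exact h
      · exfalso
        obtain ⟨K', hK'S', hK'⟩ := aux_omegaOn_exists G S'
        have hK'ne : K'.Nonempty := by
          rw [← Finset.card_pos, hK'.card_eq, h]
          exact aux_one_le_omegaOn G ⟨v0, hv0⟩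
        have hK'max : ∀ k : Finset V, ↑k ⊆ S → G.IsClique ↑k → k.card ≤ K'.card := by
          intro k hk hkcl
          rw [hK'.card_eq, h]
          exact aux_le_omegaOn G hk ⟨hkcl, rfl⟩
        obtain ⟨v, hvT, hvK'⟩ := aux_stable_meets_maxclique G S hS T hTS hTst hTmax
          K' (hK'S'.trans hS'sub) hK'.isClique hK'ne hK'max
        exact (hK'S' (Finset.mem_coe.2 hvK')).2 (Finset.mem_coe.2 hvT)
    obtain ⟨C'⟩ := ih S' hS'card hS'noP4
    have hcol : (G.induce S).Colorable (omegaOn G S' + 1) := by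
      refine ⟨SimpleGraph.Coloring.mk (fun v => if h : (v : V) ∈ T then 0 else
        Fin.succ (C' ⟨(v : V), ⟨v.2, fun hT => h (Finset.mem_coe.1 hT)⟩⟩)) ?_⟩
      intro a b hab
      have hGab : G.Adj ↑a ↑b := by simpa using hab
      have hne : (a : V) ≠ (b : V) := hGab.ne
      by_cases haT : (a : V) ∈ T <;> by_cases hbT : (b : V) ∈ T
      · exact absurd hGab (hTst _ haT _ hbT hne)
      · simp only [dif_pos haT, dif_neg hbT]
        exact fun h => (Fin.succ_ne_zero _) h.symm
      · simp only [dif_pos hbT, dif_neg haT]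
        exact Fin.succ_ne_zero _
      · simp only [dif_neg haT, dif_neg hbT]
        intro h
        have hadj' : (G.induce S').Adj ⟨(a : V), ⟨a.2, fun hT => haT (Finset.mem_coe.1 hT)⟩⟩
            ⟨(b : V), ⟨b.2, fun hT => hbT (Finset.mem_coe.1 hT)⟩⟩ := by
          simpa using hGab
        exact C'.valid hadj' (Fin.succ_injective _ h)
    exact hcol.mono (Nat.succ_le_of_lt homega)

lemma aux_noP4_perfect (S : Set V) (hS : NoP4 G S) :
    (G.induce S).chromaticNumber = (omegaOn G S : ℕ∞) := by
  classical
  apply le_antisymm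
  · exact (aux_noP4_colorable G S.ncard S le_rfl hS).chromaticNumber_le
  · obtain ⟨s, hsS, hs⟩ := aux_omegaOn_exists G S
    set t : Finset ↥S := s.subtype (fun v => v ∈ S) with ht
    have htcard : t.card = s.card := by
      rw [ht, Finset.card_subtype, Finset.filter_true_of_mem]
      intro x hx
      exact hsS (Finset.mem_coe.2 hx)
    have htcl : (G.induce S).IsClique ↑t := by
      intro a ha b hb hab
      have has : (a : V) ∈ s := by
        have := Finset.mem_coe.1 ha
        rw [ht, Finset.mem_subtype] at this
        exact this
      have hbs : (b : V) ∈ s := by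
        have := Finset.mem_coe.1 hb
        rw [ht, Finset.mem_subtype] at this
        exact this
      have : G.Adj ↑a ↑b := hs.isClique (Finset.mem_coe.2 has) (Finset.mem_coe.2 hbs)
        (fun h => hab (Subtype.ext h))
      simpa using this
    have hle := htcl.card_le_chromaticNumber
    rw [htcard, hs.card_eq] at hle
    exact hle

end Main2


theorem stmt_17 [Fintype V] (G : SimpleGraph V) (hfree : P2P4Free G)
    (hG : MNPD G) :
    ¬ ∃ x y : V, x ≠ y ∧ G.Adj x y ∧ (∃ z : V, z ≠ x ∧ z ≠ y) ∧
      (∀ v : V, v ≠ x → v ≠ y →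
        ((G.Adj v x ∧ G.Adj v y) ∨ (¬ G.Adj v x ∧ ¬ G.Adj v y))) := by
  rintro ⟨x, y, hxy, hadjxy, -, hom⟩
  classical
  set M : Set V := {v | v ≠ x ∧ v ≠ y ∧ ¬ G.Adj v x} with hMdef
  set N : Set V := {v | v ≠ x ∧ v ≠ y ∧ G.Adj v x} with hNdef
  have hMy : ∀ v ∈ M, ¬ G.Adj v y := by
    intro v hv
    rcases hom v hv.1 hv.2.1 with ⟨h1, -⟩ | ⟨-, h2⟩
    · exact absurd h1 hv.2.2
    · exact h2
  have hmemM : ∀ u w, u ∈ M ∪ {x} → w ∈ M ∪ {x} → G.Adj u w → u ∈ M := by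
    intro u w hu hw hadj
    rcases hu with hu | hu
    · exact hu
    · rw [Set.mem_singleton_iff] at hu
      subst hu
      rcases hw with hw | hw
      · exact absurd hadj.symm hw.2.2
      · rw [Set.mem_singleton_iff] at hw
        subst hw
        exact absurd hadj (G.irrefl)
  have hnoP4 : NoP4 G (M ∪ {x}) := by
    rintro ⟨c, d, e, f, hc, hd, he, hf, hcd, hce, hcf, hde, hdf, hef,
      acd, ade, aef, nce, ncf, ndf⟩
    have cM : c ∈ M := hmemM c d hc hd acd
    have dM : d ∈ M := hmemM d e hd he ade
    have eM : e ∈ M := hmemM e f he hf aef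
    have fM : f ∈ M := hmemM f e hf he aef.symm
    have hnodup : [x, y, c, d, e, f].Nodup := by
      simp only [List.nodup_cons, List.mem_cons, List.not_mem_nil, or_false,
        List.nodup_nil, and_true, not_or]
      exact ⟨⟨hxy, Ne.symm cM.1, Ne.symm dM.1, Ne.symm eM.1, Ne.symm fM.1⟩,
        ⟨Ne.symm cM.2.1, Ne.symm dM.2.1, Ne.symm eM.2.1, Ne.symm fM.2.1⟩,
        ⟨hcd, hce, hcf⟩, ⟨hde, hdf⟩, hef, not_false⟩
    exact hfree ⟨x, y, c, d, e, f, hnodup, hadjxy, acd, ade, aef, nce, ncf, ndf,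
      fun h => cM.2.2 h.symm, fun h => dM.2.2 h.symm,
      fun h => eM.2.2 h.symm, fun h => fM.2.2 h.symm,
      fun h => (hMy c cM) h.symm, fun h => (hMy d dM) h.symm,
      fun h => (hMy e eM) h.symm, fun h => (hMy f fM) h.symm⟩
  have hperf : IsPerfectOn G (M ∪ {x}) := by
    intro T hT
    exact aux_noP4_perfect G T (NoP4.anti hT hnoP4)
  apply hG.1
  intro H hHsub hHne
  by_cases hH : H = Set.univ
  · subst hH
    refine ⟨M ∪ {x}, N ∪ {y}, ?_, ?_, hperf, ?_⟩
    · ext v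
      simp only [Set.mem_union, Set.mem_singleton_iff, Set.mem_univ, iff_true]
      by_cases hvx : v = x
      · exact Or.inl (Or.inr hvx)
      by_cases hvy : v = y
      · exact Or.inr (Or.inr hvy)
      by_cases hvadj : G.Adj v x
      · exact Or.inr (Or.inl ⟨hvx, hvy, hvadj⟩)
      · exact Or.inl (Or.inl ⟨hvx, hvy, hvadj⟩)
    · rw [Set.disjoint_left]
      rintro v (hv | hv) (hw | hw)
      · exact hv.2.2 hw.2.2
      · rw [Set.mem_singleton_iff] at hw
        exact hv.2.1 hw
      · rw [Set.mem_singleton_iff] at hv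
        exact hw.1 hv
      · rw [Set.mem_singleton_iff] at hv
        rw [Set.mem_singleton_iff] at hw
        exact hxy (hv ▸ hw)
    · obtain ⟨s, hsS, hs⟩ := aux_omegaOn_exists G (N ∪ {y})
      have hins : G.IsNClique (omegaOn G (N ∪ {y}) + 1) (insert x s) := by
        refine hs.insert ?_
        intro b hb
        rcases hsS (Finset.mem_coe.2 hb) with hbN | hby
        · exact hbN.2.2.symm
        · rw [Set.mem_singleton_iff] at hby
          rw [hby]
          exact hadjxy
      have := aux_le_omegaOn G (Set.subset_univ _) hins
      omega
  · exact hG.2 H hH H subset_rfl hHne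
end
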